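/- Fix an integer N ≥ 1, weights α_1,…,α_N > 0 with Σ_{k=1}^N α_k = 1, θ ∈ (0,1), and ν > 0. Suppose each F_k : ℝ^d → ℝ is B-Lipschitz, L-smooth, and bounded from below. Let (Ω, 𝔉, P) be a probability space and let (w_t)_{t≥0} and (η_t)_{t≥0} be sequences of random variables with values in ℝ^d and ℝ respectively such that for every t and almost every ω: (i) η_t(ω) minimizes η ↦ F̄_{θ,ν}(w_t(ω), η) over ℝ; (ii) F̄_{θ,ν}(w_t, η_t) is integrable; and (iii) E[ F̄_{θ,ν}(w_{t+1}, η_t) | σ(w_t) ] − inf_{w ∈ ℝ^d} F̄_{θ,ν}(w, η_t) ≤ ε_t almost surely, where (ε_t)_{t≥0} is a positive sequence with Σ_{t=0}^∞ ε_t < ∞. Then, almost surely, the gradient ∇_{(w,η)} F̄_{θ,ν}(w_t, η_t) converges to 0 as t → ∞. -/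

import Mathlib

open Finset MeasureTheory Filter

/-- The smoothing `g_ν` of the positive-part function. -/
noncomputable def gsm (ν ρ : ℝ) : ℝ :=
  if ρ ≤ 0 then ν / 2 else if ρ ≤ ν then ρ ^ 2 / (2 * ν) + ν / 2 else ρ

/-- derivative of `gsm ν`. -/
noncomputable def gsmd (ν ρ : ℝ) : ℝ := (max ρ 0 - max (ρ - ν) 0) / ν

lemma gsm_alt {ν : ℝ} (hν : 0 < ν) (ρ : ℝ) :
    gsm ν ρ = ν / 2 + ((max ρ 0) ^ 2 - (max (ρ - ν) 0) ^ 2) / (2 * ν) := by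
  unfold gsm
  rcases le_or_gt ρ 0 with h0 | h0
  · rw [if_pos h0, max_eq_right h0, max_eq_right (by linarith)]
    ring
  · rw [if_neg (not_le.2 h0), max_eq_left h0.le]
    rcases le_or_gt ρ ν with h1 | h1
    · rw [if_pos h1, max_eq_right (by linarith)]
      ring
    · rw [if_neg (not_le.2 h1), max_eq_left (by linarith)]
      field_simp
      ring

lemma hasDerivAt_sq_posPart (x : ℝ) :
    HasDerivAt (fun r : ℝ => (max r 0) ^ 2) (2 * max x 0) x := by
  rcases lt_trichotomy x 0 with hx | hx | hx
  · have : (fun r : ℝ => (max r 0) ^ 2) =ᶠ[nhds x] fun _ => (0:ℝ) := by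
      filter_upwards [eventually_lt_nhds hx] with r hr
      rw [max_eq_right hr.le]; norm_num
    rw [max_eq_right hx.le]
    simpa using (hasDerivAt_const x (0:ℝ)).congr_of_eventuallyEq this
  · subst hx
    rw [hasDerivAt_iff_isLittleO]
    rw [Asymptotics.isLittleO_iff]
    intro c hc
    filter_upwards [Metric.ball_mem_nhds (0:ℝ) hc] with r hr
    simp only [Metric.mem_ball, Real.dist_eq, sub_zero] at hr
    have h1 : |max r 0| ≤ |r| := by
      rcases le_total r 0 with h | h
      · rw [max_eq_right h]; simp
      · rw [max_eq_left h]
    simp only [max_self, sub_zero, smul_zero, mul_zero, Real.norm_eq_abs]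
    have key : |(max r 0) ^ 2| ≤ c * |r| := by
      rw [abs_pow, sq]
      apply mul_le_mul (le_of_lt (lt_of_le_of_lt h1 hr)) h1 (abs_nonneg _) hc.le
    simpa using key
  · have : (fun r : ℝ => (max r 0) ^ 2) =ᶠ[nhds x] fun r => r ^ 2 := by
      filter_upwards [eventually_gt_nhds hx] with r hr
      rw [max_eq_left hr.le]
    have h2 : HasDerivAt (fun r : ℝ => r ^ 2) (2 * x) x := by
      simpa using hasDerivAt_pow 2 x
    simpa [max_eq_left hx.le] using h2.congr_of_eventuallyEq this

lemma hasDerivAt_gsm {ν : ℝ} (hν : 0 < ν) (ρ : ℝ) :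
    HasDerivAt (gsm ν) (gsmd ν ρ) ρ := by
  have hfun : gsm ν = fun ρ => ν / 2 + ((max ρ 0) ^ 2 - (max (ρ - ν) 0) ^ 2) / (2 * ν) :=
    funext (gsm_alt hν)
  rw [hfun]
  have h1 : HasDerivAt (fun r : ℝ => (max (r - ν) 0) ^ 2) (2 * max (ρ - ν) 0) ρ := by
    have := (hasDerivAt_sq_posPart (ρ - ν)).comp ρ ((hasDerivAt_id ρ).sub_const ν)
    simpa [Function.comp_def] using this
  have h2 := (((hasDerivAt_sq_posPart ρ).sub h1).div_const (2 * ν)).const_add (ν / 2)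
  refine h2.congr_deriv ?_
  unfold gsmd
  field_simp

lemma gsmd_nonneg {ν : ℝ} (hν : 0 < ν) (ρ : ℝ) : 0 ≤ gsmd ν ρ := by
  unfold gsmd
  apply div_nonneg _ hν.le
  have : max (ρ - ν) 0 ≤ max ρ 0 := max_le_max (by linarith) le_rfl
  linarith

lemma gsmd_le_one {ν : ℝ} (hν : 0 < ν) (ρ : ℝ) : gsmd ν ρ ≤ 1 := by
  unfold gsmd
  rw [div_le_one hν]
  rcases le_total ρ 0 with h | h
  · rw [max_eq_right h, max_eq_right (by linarith)]; linarith
  · rw [max_eq_left h]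
    rcases le_total (ρ - ν) 0 with h1 | h1
    · rw [max_eq_right h1]; linarith
    · rw [max_eq_left h1]; linarith

lemma gsmd_eq_one {ν ρ : ℝ} (hν : 0 < ν) (hρ : ν < ρ) : gsmd ν ρ = 1 := by
  unfold gsmd
  rw [max_eq_left (by linarith), max_eq_left (by linarith)]
  field_simp
  ring

lemma gsmd_lipschitz {ν : ℝ} (hν : 0 < ν) (a b : ℝ) :
    |gsmd ν a - gsmd ν b| ≤ (2 / ν) * |a - b| := by
  unfold gsmd
  rw [div_sub_div_same, abs_div, abs_of_pos hν]
  rw [div_le_iff₀ hν] at *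
  have h1 : |max a 0 - max b 0| ≤ |a - b| := abs_max_sub_max_le_abs a b 0
  have h2 : |max (a - ν) 0 - max (b - ν) 0| ≤ |a - b| := by
    have := abs_max_sub_max_le_abs (a - ν) (b - ν) 0
    simpa using this
  calc |max a 0 - max (a - ν) 0 - (max b 0 - max (b - ν) 0)|
      ≤ |max a 0 - max b 0| + |max (a - ν) 0 - max (b - ν) 0| := by
        rw [show max a 0 - max (a - ν) 0 - (max b 0 - max (b - ν) 0)
          = (max a 0 - max b 0) - (max (a - ν) 0 - max (b - ν) 0) by ring]
        exact abs_sub _ _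
    _ ≤ 2 * |a - b| := by linarith
    _ = 2 / ν * |a - b| * ν := by field_simp

lemma gsm_lipschitz {ν : ℝ} (hν : 0 < ν) (a b : ℝ) :
    |gsm ν a - gsm ν b| ≤ |a - b| := by
  have hdiff : Differentiable ℝ (gsm ν) := fun x => (hasDerivAt_gsm hν x).differentiableAt
  have := lipschitzWith_of_nnnorm_deriv_le hdiff (C := 1) (fun x => by
    rw [(hasDerivAt_gsm hν x).deriv]
    rw [← NNReal.coe_le_coe, coe_nnnorm, NNReal.coe_one, Real.norm_eq_abs,
      abs_le]
    constructor
    · linarith [gsmd_nonneg hν x]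
    · exact gsmd_le_one hν x)
  have h := this.dist_le_mul a b
  simpa [Real.dist_eq] using h

lemma gsm_ge_half {ν : ℝ} (hν : 0 < ν) (ρ : ℝ) : ν / 2 ≤ gsm ν ρ := by
  rw [gsm_alt hν]
  have : (max (ρ - ν) 0) ^ 2 ≤ (max ρ 0) ^ 2 := by
    apply pow_le_pow_left₀ (le_max_right _ _) (max_le_max (by linarith) le_rfl)
  have h2 : 0 ≤ ((max ρ 0) ^ 2 - (max (ρ - ν) 0) ^ 2) / (2 * ν) :=
    div_nonneg (by linarith) (by linarith)
  linarith

lemma gsm_nonneg {ν : ℝ} (hν : 0 < ν) (ρ : ℝ) : 0 ≤ gsm ν ρ :=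
  le_trans (by linarith) (gsm_ge_half hν ρ)

lemma gsm_ge_self {ν : ℝ} (hν : 0 < ν) (ρ : ℝ) : ρ ≤ gsm ν ρ := by
  unfold gsm
  split_ifs with h0 h1
  · linarith
  · rw [← sub_nonneg]
    have heq : ρ ^ 2 / (2 * ν) + ν / 2 - ρ = (ρ - ν) ^ 2 / (2 * ν) := by
      field_simp; ring
    rw [heq]; positivity
  · exact le_refl ρ

lemma quad_upper {E : Type*} [NormedAddCommGroup E] [NormedSpace ℝ E]
    {f : E → ℝ} {g : E → E →L[ℝ] ℝ} (hf : ∀ x, HasFDerivAt f (g x) x)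
    {C : ℝ} (hC : 0 ≤ C) (hlip : ∀ x y, ‖g x - g y‖ ≤ C * ‖x - y‖) (x y : E) :
    f y ≤ f x + g x (y - x) + C / 2 * ‖y - x‖ ^ 2 := by
  set v := y - x with hv
  have hline : ∀ t : ℝ, HasDerivAt (fun t : ℝ => x + t • v) v t := by
    intro t
    simpa using ((hasDerivAt_id t).smul_const v).const_add x
  have hφ : ∀ t : ℝ, HasDerivAt (fun t : ℝ => f (x + t • v)) (g (x + t • v) v) t := by
    intro t
    exact (hf (x + t • v)).comp_hasDerivAt t (hline t)
  set ψ : ℝ → ℝ := fun t => f x + t * (g x v) + (C / 2 * ‖v‖ ^ 2) * t ^ 2 - f (x + t • v)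
    with hψdef
  have hψ : ∀ t : ℝ, HasDerivAt ψ
      (g x v + (C / 2 * ‖v‖ ^ 2) * (2 * t) - g (x + t • v) v) t := by
    intro t
    have h1 : HasDerivAt (fun t : ℝ => f x + t * (g x v) + (C / 2 * ‖v‖ ^ 2) * t ^ 2)
        (g x v + (C / 2 * ‖v‖ ^ 2) * (2 * t)) t := by
      have ha := (hasDerivAt_mul_const (c := g x v) (x := t)).const_add (f x)
      have hb := (hasDerivAt_pow 2 t).const_mul (C / 2 * ‖v‖ ^ 2)
      have := ha.add hb
      simpa [Pi.add_def, mul_comm, mul_assoc, mul_left_comm, pow_one] using this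
    exact h1.sub (hφ t)
  have hmono : MonotoneOn ψ (Set.Ici (0 : ℝ)) := by
    apply monotoneOn_of_deriv_nonneg (convex_Ici 0)
    · exact (Differentiable.continuous (fun t => (hψ t).differentiableAt)).continuousOn
    · exact fun t _ => ((hψ t).differentiableAt).differentiableWithinAt
    · intro t ht
      rw [interior_Ici] at ht
      rw [(hψ t).deriv]
      have hbound : g (x + t • v) v - g x v ≤ C * (t * ‖v‖) * ‖v‖ := by
        have h1 : g (x + t • v) v - g x v = (g (x + t • v) - g x) v := by simp
        rw [h1]
        calc (g (x + t • v) - g x) v ≤ ‖(g (x + t • v) - g x) v‖ := le_abs_self _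
          _ ≤ ‖g (x + t • v) - g x‖ * ‖v‖ :=
            ContinuousLinearMap.le_opNorm _ _
          _ ≤ (C * ‖x + t • v - x‖) * ‖v‖ := by
            apply mul_le_mul_of_nonneg_right (hlip _ _) (norm_nonneg _)
          _ = C * (|t| * ‖v‖) * ‖v‖ := by
            rw [add_sub_cancel_left, norm_smul, Real.norm_eq_abs]
          _ = C * (t * ‖v‖) * ‖v‖ := by
            rw [abs_of_pos ht]
      nlinarith [norm_nonneg v, sq_nonneg t]
  have h01 := hmono (Set.self_mem_Ici) (Set.mem_Ici.2 zero_le_one) zero_le_one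
  have hψ0 : ψ 0 = 0 := by simp [hψdef]
  have hψ1 : ψ 1 = f x + g x v + C / 2 * ‖v‖ ^ 2 - f y := by
    simp [hψdef, hv]
  rw [hψ0, hψ1] at h01
  linarith

lemma descent_inf {E : Type*} [NormedAddCommGroup E] [InnerProductSpace ℝ E] [CompleteSpace E]
    {f : E → ℝ} {g : E → E →L[ℝ] ℝ} (hf : ∀ x, HasFDerivAt f (g x) x)
    {C : ℝ} (hC : 0 < C) (hlip : ∀ x y, ‖g x - g y‖ ≤ C * ‖x - y‖)
    (hbdd : BddBelow (Set.range f)) (x : E) :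
    ‖g x‖ ^ 2 ≤ 2 * C * (f x - ⨅ y, f y) := by
  set grad := (InnerProductSpace.toDual ℝ E).symm (g x) with hgrad
  set y := x - (1 / C) • grad with hy
  have hgv : g x (y - x) = -(1 / C) * ‖g x‖ ^ 2 := by
    have h1 : y - x = -((1 / C) • grad) := by rw [hy]; abel
    have h2 : g x grad = ‖grad‖ ^ 2 := by
      have : InnerProductSpace.toDual ℝ E grad = g x := by
        rw [hgrad]; simp
      rw [← this]
      rw [InnerProductSpace.toDual_apply_apply]
      exact real_inner_self_eq_norm_sq grad
    have h3 : ‖grad‖ = ‖g x‖ := by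
      rw [hgrad]; exact LinearIsometryEquiv.norm_map _ _
    rw [h1, map_neg, ContinuousLinearMap.map_smul]
    simp only [smul_eq_mul, h2, h3]
    ring
  have hyx : ‖y - x‖ ^ 2 = (1 / C) ^ 2 * ‖g x‖ ^ 2 := by
    have h1 : y - x = -((1 / C) • grad) := by rw [hy]; abel
    rw [h1, norm_neg, norm_smul, Real.norm_eq_abs, mul_pow, sq_abs]
    congr 1
    rw [hgrad]
    rw [LinearIsometryEquiv.norm_map]
  have hq := quad_upper hf hC.le hlip x y
  rw [hgv, hyx] at hq
  have hfy : f y ≤ f x - ‖g x‖ ^ 2 / (2 * C) := by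
    have : -(1 / C) * ‖g x‖ ^ 2 + C / 2 * ((1 / C) ^ 2 * ‖g x‖ ^ 2)
        = -(‖g x‖ ^ 2 / (2 * C)) := by
      field_simp
      ring
    linarith
  have hinf : (⨅ z, f z) ≤ f y := ciInf_le hbdd y
  have h2C : (0:ℝ) < 2 * C := by linarith
  rw [← sub_nonneg]
  have : 2 * C * (f x - ⨅ z, f z) - ‖g x‖ ^ 2
      = 2 * C * ((f x - ‖g x‖ ^ 2 / (2 * C)) - ⨅ z, f z) := by
    field_simp
    ring
  rw [this]
  apply mul_nonneg h2C.le
  linarith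

lemma ae_tendsto_zero_of_summable_integral {Ω : Type*} [MeasurableSpace Ω] {μ : Measure Ω}
    (D : ℕ → Ω → ℝ) (hmeas : ∀ t, Measurable (D t)) (hnn : ∀ t ω, 0 ≤ D t ω)
    (hint : ∀ t, Integrable (D t) μ) (hsum : Summable (fun t => ∫ ω, D t ω ∂μ)) :
    ∀ᵐ ω ∂μ, Tendsto (fun t => D t ω) atTop (nhds 0) := by
  have hkey : ∫⁻ ω, ∑' t, ENNReal.ofReal (D t ω) ∂μ
      = ∑' t, ENNReal.ofReal (∫ ω, D t ω ∂μ) := by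
    rw [lintegral_tsum (fun t => ((hmeas t).ennreal_ofReal).aemeasurable)]
    congr 1
    funext t
    rw [MeasureTheory.ofReal_integral_eq_lintegral_ofReal (hint t)
      (Filter.Eventually.of_forall (hnn t))]
  have hfin : ∫⁻ ω, ∑' t, ENNReal.ofReal (D t ω) ∂μ < ⊤ := by
    rw [hkey, ← ENNReal.ofReal_tsum_of_nonneg
      (fun t => integral_nonneg (hnn t)) hsum]
    exact ENNReal.ofReal_lt_top
  have hae : ∀ᵐ ω ∂μ, ∑' t, ENNReal.ofReal (D t ω) < ⊤ := by
    apply ae_lt_top (Measurable.ennreal_tsum (fun t => (hmeas t).ennreal_ofReal)) hfin.ne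
  filter_upwards [hae] with ω hω
  have h1 : Tendsto (fun t => ENNReal.ofReal (D t ω)) atTop (nhds 0) :=
    ENNReal.tendsto_atTop_zero_of_tsum_ne_top hω.ne
  have h2 : Tendsto (fun t => (ENNReal.ofReal (D t ω)).toReal) atTop (nhds 0) := by
    have := (ENNReal.tendsto_toReal (by simp : (0:ENNReal) ≠ ⊤)).comp h1
    exact this
  convert h2 using 2 with t
  rw [ENNReal.toReal_ofReal (hnn t ω)]


set_option maxHeartbeats 2000000 in
theorem inexact_alternating_minimization_gradient_to_zero
    (N d : ℕ) (hN : 1 ≤ N) (α : Fin N → ℝ) (hα : ∀ k, 0 < α k)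
    (hαsum : ∑ k, α k = 1) (θ ν : ℝ) (hθ0 : 0 < θ) (hθ1 : θ < 1) (hν : 0 < ν)
    (B L : ℝ)
    (F : Fin N → EuclideanSpace ℝ (Fin d) → ℝ)
    (hFlip : ∀ k (u u' : EuclideanSpace ℝ (Fin d)), |F k u - F k u'| ≤ B * ‖u - u'‖)
    (hFdiff : ∀ k, Differentiable ℝ (F k))
    (hFsmooth : ∀ k (u u' : EuclideanSpace ℝ (Fin d)),
      ‖gradient (F k) u - gradient (F k) u'‖ ≤ L * ‖u - u'‖)
    (hFbdd : ∀ k, BddBelow (Set.range (F k)))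
    (Fbar : EuclideanSpace ℝ (Fin d) → ℝ → ℝ)
    (hFbar : Fbar = fun u η => η + (1 / θ) * ∑ k, α k * gsm ν (F k u - η))
    (Ω : Type*) [MeasureSpace Ω] [IsProbabilityMeasure (volume : Measure Ω)]
    (w : ℕ → Ω → EuclideanSpace ℝ (Fin d)) (e : ℕ → Ω → ℝ)
    (hw : ∀ t, Measurable (w t)) (he : ∀ t, Measurable (e t))
    (ε : ℕ → ℝ) (hε : ∀ t, 0 < ε t) (hεsum : Summable ε)
    (hmin : ∀ t, ∀ᵐ ω ∂(volume : Measure Ω),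
      ∀ η' : ℝ, Fbar (w t ω) (e t ω) ≤ Fbar (w t ω) η')
    (hint : ∀ t, Integrable (fun ω => Fbar (w t ω) (e t ω)) (volume : Measure Ω))
    (hstep : ∀ t, ∀ᵐ ω ∂(volume : Measure Ω),
      ((volume : Measure Ω)[(fun ω' => Fbar (w (t + 1) ω') (e t ω')) |
          MeasurableSpace.comap (w t) inferInstance]) ω
        - (⨅ u : EuclideanSpace ℝ (Fin d), Fbar u (e t ω)) ≤ ε t) :
    ∀ᵐ ω ∂(volume : Measure Ω),
      Tendsto (fun t => fderiv ℝ (fun p : EuclideanSpace ℝ (Fin d) × ℝ => Fbar p.1 p.2)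
          (w t ω, e t ω)) atTop (nhds 0) := by
  classical
  haveI : Nonempty (Fin N) := ⟨⟨0, hN⟩⟩
  have hFbarApp : ∀ u η, Fbar u η = η + (1 / θ) * ∑ k, α k * gsm ν (F k u - η) := by
    intro u η; rw [hFbar]
  set B' : ℝ := max B 0 with hB'def
  have hB'0 : 0 ≤ B' := le_max_right _ _
  set L' : ℝ := max L 0 with hL'def
  have hL'0 : 0 ≤ L' := le_max_right _ _
  have hθinv : (0:ℝ) < 1/θ := by positivity
  have hθinv1 : (1:ℝ) ≤ 1/θ := by
    rw [le_div_iff₀ hθ0]; linarith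
  have hFlip' : ∀ k u u', |F k u - F k u'| ≤ B' * ‖u - u'‖ := fun k u u' =>
    (hFlip k u u').trans (mul_le_mul_of_nonneg_right (le_max_left _ _) (norm_nonneg _))
  choose bl hbl using hFbdd
  set m0 : ℝ := univ.inf' univ_nonempty bl with hm0def
  have hm0 : ∀ k u, m0 ≤ F k u := fun k u =>
    le_trans (inf'_le _ (mem_univ k)) (hbl k (Set.mem_range_self u))
  -- derivative data for the F k
  have hFk : ∀ k u, HasFDerivAt (F k) (fderiv ℝ (F k) u) u := fun k u =>
    (hFdiff k u).hasFDerivAt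
  have hf'bd : ∀ k u, ‖fderiv ℝ (F k) u‖ ≤ B' := by
    intro k u
    have hlipW : LipschitzWith (Real.toNNReal B') (F k) := by
      apply LipschitzWith.of_dist_le_mul
      intro x y
      rw [Real.coe_toNNReal B' hB'0, Real.dist_eq, dist_eq_norm]
      exact hFlip' k x y
    have := norm_fderiv_le_of_lipschitz ℝ hlipW (x₀ := u)
    rwa [Real.coe_toNNReal B' hB'0] at this
  have hf'lip : ∀ k u u', ‖fderiv ℝ (F k) u - fderiv ℝ (F k) u'‖ ≤ L' * ‖u - u'‖ := by
    intro k u u'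
    have h2 : ‖fderiv ℝ (F k) u - fderiv ℝ (F k) u'‖
        = ‖gradient (F k) u - gradient (F k) u'‖ := by
      rw [gradient, gradient, ← LinearIsometryEquiv.map_sub, LinearIsometryEquiv.norm_map]
    rw [h2]
    exact (hFsmooth k u u').trans
      (mul_le_mul_of_nonneg_right (le_max_left _ _) (norm_nonneg _))
  set CC : ℝ := (1/θ) * (L' + 2 * B' ^ 2 / ν) + 1 with hCCdef
  have hCC0 : 0 < CC := by positivity
  set Gm : EuclideanSpace ℝ (Fin d) → ℝ → (EuclideanSpace ℝ (Fin d) →L[ℝ] ℝ) :=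
    fun u η => (1/θ) • ∑ k, α k • (gsmd ν (F k u - η) • fderiv ℝ (F k) u) with hGmdef
  -- partial derivative in u
  have hG : ∀ η u, HasFDerivAt (fun u' => Fbar u' η) (Gm u η) u := by
    intro η u
    have h1 : ∀ k : Fin N, HasFDerivAt (fun u' => α k * gsm ν (F k u' - η))
        (α k • (gsmd ν (F k u - η) • fderiv ℝ (F k) u)) u := by
      intro k
      have h2 : HasFDerivAt (fun u' => F k u' - η) (fderiv ℝ (F k) u) u :=
        (hFk k u).sub_const η
      have h3 := (hasDerivAt_gsm hν (F k u - η)).comp_hasFDerivAt u h2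
      exact h3.const_mul (α k)
    have h4 := HasFDerivAt.fun_sum (fun k (_ : k ∈ univ) => h1 k)
    have h5 := (h4.const_mul (1/θ)).const_add η
    have heq : (fun u' => Fbar u' η)
        = fun u' => η + (1/θ) * ∑ k, α k * gsm ν (F k u' - η) := by
      funext u'; rw [hFbarApp]
    rw [heq, hGmdef]
    exact h5
  -- Lipschitz bound for Gm in u
  have hGlip : ∀ η u u', ‖Gm u η - Gm u' η‖ ≤ CC * ‖u - u'‖ := by
    intro η u u'
    have hsplit : Gm u η - Gm u' η = (1/θ) • ∑ k,
        (α k • (gsmd ν (F k u - η) • fderiv ℝ (F k) u)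
          - α k • (gsmd ν (F k u' - η) • fderiv ℝ (F k) u')) := by
      simp only [hGmdef, Finset.sum_sub_distrib, smul_sub]
    have hterm : ∀ k : Fin N,
        ‖α k • (gsmd ν (F k u - η) • fderiv ℝ (F k) u)
          - α k • (gsmd ν (F k u' - η) • fderiv ℝ (F k) u')‖
        ≤ α k * ((L' + 2 * B' ^ 2 / ν) * ‖u - u'‖) := by
      intro k
      rw [← smul_sub, norm_smul, Real.norm_eq_abs, abs_of_pos (hα k)]
      apply mul_le_mul_of_nonneg_left _ (hα k).le
      have hid : gsmd ν (F k u - η) • fderiv ℝ (F k) u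
            - gsmd ν (F k u' - η) • fderiv ℝ (F k) u'
          = (gsmd ν (F k u - η) - gsmd ν (F k u' - η)) • fderiv ℝ (F k) u
            + gsmd ν (F k u' - η) • (fderiv ℝ (F k) u - fderiv ℝ (F k) u') := by
        rw [sub_smul, smul_sub]; abel
      rw [hid]
      have h1 : ‖(gsmd ν (F k u - η) - gsmd ν (F k u' - η)) • fderiv ℝ (F k) u‖
          ≤ (2 / ν * (B' * ‖u - u'‖)) * B' := by
        rw [norm_smul, Real.norm_eq_abs]
        apply mul_le_mul _ (hf'bd k u) (norm_nonneg _) (by positivity)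
        calc |gsmd ν (F k u - η) - gsmd ν (F k u' - η)|
            ≤ 2 / ν * |F k u - η - (F k u' - η)| := gsmd_lipschitz hν _ _
          _ = 2 / ν * |F k u - F k u'| := by ring_nf
          _ ≤ 2 / ν * (B' * ‖u - u'‖) := by
              apply mul_le_mul_of_nonneg_left (hFlip' k u u') (by positivity)
      have h2 : ‖gsmd ν (F k u' - η) • (fderiv ℝ (F k) u - fderiv ℝ (F k) u')‖
          ≤ L' * ‖u - u'‖ := by
        rw [norm_smul, Real.norm_eq_abs,
          abs_of_nonneg (gsmd_nonneg hν _)]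
        calc gsmd ν (F k u' - η) * ‖fderiv ℝ (F k) u - fderiv ℝ (F k) u'‖
            ≤ 1 * ‖fderiv ℝ (F k) u - fderiv ℝ (F k) u'‖ :=
              mul_le_mul_of_nonneg_right (gsmd_le_one hν _) (norm_nonneg _)
          _ = ‖fderiv ℝ (F k) u - fderiv ℝ (F k) u'‖ := one_mul _
          _ ≤ L' * ‖u - u'‖ := hf'lip k u u'
      calc ‖(gsmd ν (F k u - η) - gsmd ν (F k u' - η)) • fderiv ℝ (F k) u
            + gsmd ν (F k u' - η) • (fderiv ℝ (F k) u - fderiv ℝ (F k) u')‖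
          ≤ (2 / ν * (B' * ‖u - u'‖)) * B' + L' * ‖u - u'‖ :=
            le_trans (norm_add_le _ _) (add_le_add h1 h2)
        _ = (L' + 2 * B' ^ 2 / ν) * ‖u - u'‖ := by ring
    calc ‖Gm u η - Gm u' η‖
        ≤ (1/θ) * ‖∑ k, (α k • (gsmd ν (F k u - η) • fderiv ℝ (F k) u)
            - α k • (gsmd ν (F k u' - η) • fderiv ℝ (F k) u'))‖ := by
          rw [hsplit]
          have hns := norm_smul (α := ℝ) (β := EuclideanSpace ℝ (Fin d) →L[ℝ] ℝ) (1/θ)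
            (∑ k, (α k • (gsmd ν (F k u - η) • fderiv ℝ (F k) u)
              - α k • (gsmd ν (F k u' - η) • fderiv ℝ (F k) u')))
          rw [Real.norm_eq_abs, abs_of_pos hθinv] at hns
          exact le_of_eq hns
      _ ≤ (1/θ) * ∑ k, ‖α k • (gsmd ν (F k u - η) • fderiv ℝ (F k) u)
            - α k • (gsmd ν (F k u' - η) • fderiv ℝ (F k) u')‖ :=
          mul_le_mul_of_nonneg_left (norm_sum_le _ _) hθinv.le
      _ ≤ (1/θ) * ∑ k, α k * ((L' + 2 * B' ^ 2 / ν) * ‖u - u'‖) :=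
          mul_le_mul_of_nonneg_left (Finset.sum_le_sum fun k _ => hterm k) hθinv.le
      _ = ((1/θ) * (L' + 2 * B' ^ 2 / ν)) * ‖u - u'‖ := by
          rw [← Finset.sum_mul, hαsum]; ring
      _ ≤ CC * ‖u - u'‖ := by
          apply mul_le_mul_of_nonneg_right _ (norm_nonneg _)
          rw [hCCdef]; linarith
  -- global lower bound for Fbar
  have hgsum_nonneg : ∀ u η, 0 ≤ ∑ k, α k * gsm ν (F k u - η) := by
    intro u η
    apply Finset.sum_nonneg
    intro k _
    exact mul_nonneg (hα k).le (gsm_nonneg hν _)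
  have hFbar_ge : ∀ u η, m0 ≤ Fbar u η := by
    intro u η
    rw [hFbarApp]
    rcases le_total m0 η with h | h
    · nlinarith [hgsum_nonneg u η]
    · have h1 : ∀ k : Fin N, k ∈ univ → α k * (m0 - η) ≤ α k * gsm ν (F k u - η) := by
        intro k _
        apply mul_le_mul_of_nonneg_left _ (hα k).le
        calc m0 - η ≤ F k u - η := by linarith [hm0 k u]
          _ ≤ gsm ν (F k u - η) := gsm_ge_self hν _
      have h2 : (m0 - η) ≤ ∑ k, α k * gsm ν (F k u - η) := by
        calc m0 - η = ∑ k, α k * (m0 - η) := by rw [← Finset.sum_mul, hαsum, one_mul]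
          _ ≤ ∑ k, α k * gsm ν (F k u - η) := Finset.sum_le_sum h1
      have h3 : (1/θ) * (m0 - η) ≤ (1/θ) * ∑ k, α k * gsm ν (F k u - η) :=
        mul_le_mul_of_nonneg_left h2 hθinv.le
      nlinarith [sub_nonneg.2 h]
  -- Lipschitz in η
  have hFlipEta : ∀ u a b, |Fbar u a - Fbar u b| ≤ (1 + 1/θ) * |a - b| := by
    intro u a b
    rw [hFbarApp, hFbarApp]
    have h1 : ∀ k : Fin N, k ∈ univ →
        |α k * gsm ν (F k u - a) - α k * gsm ν (F k u - b)| ≤ α k * |a - b| := by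
      intro k _
      rw [← mul_sub, abs_mul, abs_of_pos (hα k)]
      apply mul_le_mul_of_nonneg_left _ (hα k).le
      calc |gsm ν (F k u - a) - gsm ν (F k u - b)| ≤ |F k u - a - (F k u - b)| :=
            gsm_lipschitz hν _ _
        _ = |a - b| := by rw [show F k u - a - (F k u - b) = -(a-b) by ring, abs_neg]
    calc |a + 1/θ * ∑ k, α k * gsm ν (F k u - a)
          - (b + 1/θ * ∑ k, α k * gsm ν (F k u - b))|
        ≤ |a - b| + |1/θ * ∑ k, α k * gsm ν (F k u - a)
            - 1/θ * ∑ k, α k * gsm ν (F k u - b)| := by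
          rw [show a + 1/θ * ∑ k, α k * gsm ν (F k u - a)
            - (b + 1/θ * ∑ k, α k * gsm ν (F k u - b))
            = (a - b) + (1/θ * ∑ k, α k * gsm ν (F k u - a)
              - 1/θ * ∑ k, α k * gsm ν (F k u - b)) by ring]
          exact abs_add_le _ _
      _ ≤ |a - b| + 1/θ * |a - b| := by
          have : |1/θ * ∑ k, α k * gsm ν (F k u - a)
              - 1/θ * ∑ k, α k * gsm ν (F k u - b)| ≤ 1/θ * |a - b| := by
            rw [← mul_sub, abs_mul, abs_of_pos hθinv, ← Finset.sum_sub_distrib]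
            apply mul_le_mul_of_nonneg_left _ hθinv.le
            calc |∑ k, (α k * gsm ν (F k u - a) - α k * gsm ν (F k u - b))|
                ≤ ∑ k, |α k * gsm ν (F k u - a) - α k * gsm ν (F k u - b)| :=
                  Finset.abs_sum_le_sum_abs _ _
              _ ≤ ∑ k, α k * |a - b| := Finset.sum_le_sum h1
              _ = |a - b| := by rw [← Finset.sum_mul, hαsum, one_mul]
          linarith
      _ = (1 + 1/θ) * |a - b| := by ring
  -- the value function Λ
  set Lam : ℝ → ℝ := fun η => ⨅ u, Fbar u η with hLamdef
  have hbddFbar : ∀ η, BddBelow (Set.range fun u => Fbar u η) := by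
    intro η
    exact ⟨m0, fun x ⟨u', hu'⟩ => hu' ▸ hFbar_ge u' η⟩
  have hLam_le : ∀ u η, Lam η ≤ Fbar u η := fun u η => ciInf_le (hbddFbar η) u
  have hLam_ge : ∀ η, m0 ≤ Lam η := fun η => le_ciInf fun u => hFbar_ge u η
  have hLam_lip : ∀ a b, |Lam a - Lam b| ≤ (1 + 1/θ) * |a - b| := by
    intro a b
    have key : ∀ x y : ℝ, Lam x ≤ Lam y + (1 + 1/θ) * |x - y| := by
      intro x y
      have h1 : ∀ u, Lam x - (1 + 1/θ) * |x - y| ≤ Fbar u y := by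
        intro u
        have h2 : Lam x ≤ Fbar u x := hLam_le u x
        have h3 : Fbar u x - Fbar u y ≤ (1 + 1/θ) * |x - y| :=
          le_trans (le_abs_self _) (hFlipEta u x y)
        linarith
      have := le_ciInf h1
      have h4 : Lam x - (1 + 1/θ) * |x - y| ≤ Lam y := this
      linarith
    have h5 := key a b
    have h6 := key b a
    rw [abs_sub_comm b a] at h6
    rw [abs_le]
    constructor <;> linarith
  have hLam_cont : Continuous Lam := by
    have : LipschitzWith ((1 + 1/θ).toNNReal) Lam := by
      apply LipschitzWith.of_dist_le_mul
      intro x y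
      rw [Real.coe_toNNReal _ (by positivity), Real.dist_eq, Real.dist_eq]
      exact hLam_lip x y
    exact this.continuous
  -- the full derivative
  set A : EuclideanSpace ℝ (Fin d) → ℝ → (EuclideanSpace ℝ (Fin d) × ℝ →L[ℝ] ℝ) :=
    fun u η => (1 - (1/θ) * ∑ k, α k * gsmd ν (F k u - η))
        • (ContinuousLinearMap.snd ℝ (EuclideanSpace ℝ (Fin d)) ℝ)
      + (Gm u η).comp (ContinuousLinearMap.fst ℝ (EuclideanSpace ℝ (Fin d)) ℝ) with hAdef
  have hA : ∀ u η, HasFDerivAt (fun p : EuclideanSpace ℝ (Fin d) × ℝ => Fbar p.1 p.2)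
      (A u η) (u, η) := by
    intro u η
    have h1 : ∀ k : Fin N, HasFDerivAt
        (fun p : EuclideanSpace ℝ (Fin d) × ℝ => α k * gsm ν (F k p.1 - p.2))
        (α k • (gsmd ν (F k u - η) •
          ((fderiv ℝ (F k) u).comp (ContinuousLinearMap.fst ℝ (EuclideanSpace ℝ (Fin d)) ℝ)
            - ContinuousLinearMap.snd ℝ (EuclideanSpace ℝ (Fin d)) ℝ))) (u, η) := by
      intro k
      have h2 : HasFDerivAt (fun p : EuclideanSpace ℝ (Fin d) × ℝ => F k p.1 - p.2)
          ((fderiv ℝ (F k) u).comp (ContinuousLinearMap.fst ℝ (EuclideanSpace ℝ (Fin d)) ℝ)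
            - ContinuousLinearMap.snd ℝ (EuclideanSpace ℝ (Fin d)) ℝ) (u, η) :=
        (((hFk k u).comp (u, η) (hasFDerivAt_fst)).sub (hasFDerivAt_snd))
      exact ((hasDerivAt_gsm hν (F k u - η)).comp_hasFDerivAt (u, η) h2).const_mul (α k)
    have h4 := HasFDerivAt.fun_sum (fun k (_ : k ∈ univ) => h1 k)
    have h5 := (hasFDerivAt_snd).add (h4.const_mul (1/θ))
    have heq : (fun p : EuclideanSpace ℝ (Fin d) × ℝ => Fbar p.1 p.2)
        = fun p : EuclideanSpace ℝ (Fin d) × ℝ =>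
            p.2 + (1/θ) * ∑ k, α k * gsm ν (F k p.1 - p.2) := by
      funext p; rw [hFbarApp]
    rw [heq]
    refine h5.congr_fderiv ?_
    apply ContinuousLinearMap.ext
    rintro ⟨v, τ⟩
    simp only [hAdef, hGmdef, ContinuousLinearMap.add_apply, ContinuousLinearMap.smul_apply,
      ContinuousLinearMap.comp_apply, ContinuousLinearMap.coe_fst', ContinuousLinearMap.coe_snd',
      ContinuousLinearMap.sum_apply, ContinuousLinearMap.sub_apply, smul_eq_mul]
    have hsum1 : ∑ k, α k * (gsmd ν (F k u - η) * ((fderiv ℝ (F k) u) v - τ))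
        = (∑ k, α k * (gsmd ν (F k u - η) * ((fderiv ℝ (F k) u) v)))
          - (∑ k, α k * gsmd ν (F k u - η)) * τ := by
      rw [Finset.sum_mul, ← Finset.sum_sub_distrib]
      apply Finset.sum_congr rfl
      intro k _
      ring
    rw [hsum1]
    ring
  have hA_min : ∀ u η, (∑ k, α k * gsmd ν (F k u - η)) = θ →
      A u η = (Gm u η).comp (ContinuousLinearMap.fst ℝ (EuclideanSpace ℝ (Fin d)) ℝ) := by
    intro u η h
    rw [hAdef]
    simp only [h]
    have : 1 - 1/θ * θ = 0 := by rw [one_div, inv_mul_cancel₀ hθ0.ne', sub_self]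
    rw [this, zero_smul, zero_add]
  have hPdiff : Differentiable ℝ (fun p : EuclideanSpace ℝ (Fin d) × ℝ => Fbar p.1 p.2) :=
    fun p => (hA p.1 p.2).differentiableAt
  have hPcont : Continuous (fun p : EuclideanSpace ℝ (Fin d) × ℝ => Fbar p.1 p.2) :=
    hPdiff.continuous
  -- measurability
  have hXmeas : ∀ t, Measurable (fun ω => Fbar (w t ω) (e t ω)) := fun t =>
    hPcont.measurable.comp ((hw t).prodMk (he t))
  have hftmeas : ∀ t, Measurable (fun ω => Fbar (w (t+1) ω) (e t ω)) := fun t =>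
    hPcont.measurable.comp ((hw (t+1)).prodMk (he t))
  -- minimizer consequences
  have hkey : ∀ t, ∀ᵐ ω ∂(volume : Measure Ω),
      (∑ k, α k * gsmd ν (F k (w t ω) - e t ω)) = θ := by
    intro t
    filter_upwards [hmin t] with ω hω
    have hder : HasDerivAt (fun η => Fbar (w t ω) η)
        (1 - (1/θ) * ∑ k, α k * gsmd ν (F k (w t ω) - e t ω)) (e t ω) := by
      have h1 : ∀ k : Fin N, HasDerivAt (fun η => α k * gsm ν (F k (w t ω) - η))
          (α k * (gsmd ν (F k (w t ω) - e t ω) * (-1))) (e t ω) := by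
        intro k
        have h2 : HasDerivAt (fun η : ℝ => F k (w t ω) - η) (-1) (e t ω) := by
          simpa using (hasDerivAt_id (e t ω)).const_sub (F k (w t ω))
        exact ((hasDerivAt_gsm hν (F k (w t ω) - e t ω)).comp (e t ω) h2).const_mul (α k)
      have h4 := HasDerivAt.fun_sum (fun k (_ : k ∈ univ) => h1 k)
      have h5 := (hasDerivAt_id (e t ω)).add (h4.const_mul (1/θ))
      have heq : (fun η => Fbar (w t ω) η)
          = fun η => η + (1/θ) * ∑ k, α k * gsm ν (F k (w t ω) - η) := by
        funext η; rw [hFbarApp]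
      rw [heq]
      refine h5.congr_deriv ?_
      simp only [mul_neg, mul_one, Finset.sum_neg_distrib]
      ring
    have hloc : IsLocalMin (fun η => Fbar (w t ω) η) (e t ω) :=
      Filter.Eventually.of_forall (fun η' => hω η')
    have h0 := hloc.deriv_eq_zero
    rw [hder.deriv] at h0
    have hθne : θ ≠ 0 := ne_of_gt hθ0
    field_simp at h0
    linarith
  have he_lb : ∀ t, ∀ᵐ ω ∂(volume : Measure Ω), m0 - ν ≤ e t ω := by
    intro t
    filter_upwards [hkey t] with ω hω
    by_contra hlt
    push_neg at hlt
    have hall : ∀ k : Fin N, gsmd ν (F k (w t ω) - e t ω) = 1 := by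
      intro k
      apply gsmd_eq_one hν
      have := hm0 k (w t ω)
      linarith
    rw [Finset.sum_congr rfl (fun k _ => by rw [hall k, mul_one])] at hω
    rw [hαsum] at hω
    linarith
  have he_ub : ∀ t ω, e t ω ≤ Fbar (w t ω) (e t ω) := by
    intro t ω
    rw [hFbarApp]
    nlinarith [hgsum_nonneg (w t ω) (e t ω), mul_nonneg hθinv.le (hgsum_nonneg (w t ω) (e t ω))]
  -- integrability of the cross term
  have hftint : ∀ t, Integrable (fun ω => Fbar (w (t+1) ω) (e t ω)) (volume : Measure Ω) := by
    intro t
    apply Integrable.mono'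
      (g := fun ω => |m0| + |Fbar (w (t+1) ω) (e (t+1) ω) + (1 + 1/θ) *
        ((Fbar (w t ω) (e t ω) - (m0 - ν)) + (Fbar (w (t+1) ω) (e (t+1) ω) - (m0 - ν)))|)
    · apply Integrable.add (integrable_const _)
      apply Integrable.abs
      apply Integrable.add (hint (t+1))
      apply Integrable.const_mul
      exact ((hint t).sub (integrable_const _)).add ((hint (t+1)).sub (integrable_const _))
    · exact (hftmeas t).aestronglyMeasurable
    · filter_upwards [hmin (t+1), he_lb t, he_lb (t+1)] with ω h1 h2 h3
      rw [Real.norm_eq_abs, abs_le]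
      have hub1 : e t ω ≤ Fbar (w t ω) (e t ω) := he_ub t ω
      have hub2 : e (t+1) ω ≤ Fbar (w (t+1) ω) (e (t+1) ω) := he_ub (t+1) ω
      have hediff : |e t ω - e (t+1) ω|
          ≤ (Fbar (w t ω) (e t ω) - (m0 - ν)) + (Fbar (w (t+1) ω) (e (t+1) ω) - (m0 - ν)) := by
        rw [abs_le]
        constructor <;> linarith
      have hKpos : (0:ℝ) < 1 + 1/θ := by positivity
      have hupper : Fbar (w (t+1) ω) (e t ω) ≤ Fbar (w (t+1) ω) (e (t+1) ω) + (1 + 1/θ) *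
          ((Fbar (w t ω) (e t ω) - (m0 - ν)) + (Fbar (w (t+1) ω) (e (t+1) ω) - (m0 - ν))) := by
        have h4 : Fbar (w (t+1) ω) (e t ω) - Fbar (w (t+1) ω) (e (t+1) ω)
            ≤ (1 + 1/θ) * |e t ω - e (t+1) ω| :=
          le_trans (le_abs_self _) (hFlipEta (w (t+1) ω) (e t ω) (e (t+1) ω))
        have h5 := mul_le_mul_of_nonneg_left hediff hKpos.le
        linarith
      have hlower : m0 ≤ Fbar (w (t+1) ω) (e t ω) := hFbar_ge _ _
      constructor
      · have := abs_nonneg (Fbar (w (t+1) ω) (e (t+1) ω) + (1 + 1/θ) *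
          ((Fbar (w t ω) (e t ω) - (m0 - ν)) + (Fbar (w (t+1) ω) (e (t+1) ω) - (m0 - ν))))
        have := neg_abs_le m0
        linarith
      · have := le_abs_self (Fbar (w (t+1) ω) (e (t+1) ω) + (1 + 1/θ) *
          ((Fbar (w t ω) (e t ω) - (m0 - ν)) + (Fbar (w (t+1) ω) (e (t+1) ω) - (m0 - ν))))
        have := abs_nonneg m0
        linarith
  -- integrability of Λ ∘ e
  have hLamInt : ∀ t, Integrable (fun ω => Lam (e t ω)) (volume : Measure Ω) := by
    intro t
    apply Integrable.mono' ((integrable_const |m0|).add (hint t).abs)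
      ((hLam_cont.measurable.comp (he t)).aestronglyMeasurable)
    apply Eventually.of_forall
    intro ω
    simp only [Function.comp_apply, Pi.add_apply]
    rw [Real.norm_eq_abs, abs_le]
    have h1 : m0 ≤ Lam (e t ω) := hLam_ge _
    have h2 : Lam (e t ω) ≤ Fbar (w t ω) (e t ω) := hLam_le _ _
    have h3 := neg_abs_le m0
    have h4 := le_abs_self (Fbar (w t ω) (e t ω))
    have h5 := abs_nonneg (Fbar (w t ω) (e t ω))
    have h6 := abs_nonneg m0
    constructor <;> linarith
  set D : ℕ → Ω → ℝ := fun t ω => Fbar (w t ω) (e t ω) - Lam (e t ω) with hDdef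
  have hDnn : ∀ t ω, 0 ≤ D t ω := fun t ω => sub_nonneg.2 (hLam_le _ _)
  have hDmeas : ∀ t, Measurable (D t) := fun t =>
    (hXmeas t).sub (hLam_cont.measurable.comp (he t))
  have hDint : ∀ t, Integrable (D t) (volume : Measure Ω) := fun t =>
    (hint t).sub (hLamInt t)
  -- the one-step expected decrease
  have hstepE : ∀ t, ∫ ω, Fbar (w (t+1) ω) (e (t+1) ω)
      ≤ (∫ ω, Fbar (w t ω) (e t ω)) - (∫ ω, D t ω) + ε t := by
    intro t
    have hm : MeasurableSpace.comap (w t) inferInstance ≤ _ := (hw t).comap_le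
    have h1 : ∫ ω, Fbar (w (t+1) ω) (e (t+1) ω) ≤ ∫ ω, Fbar (w (t+1) ω) (e t ω) := by
      apply integral_mono_ae (hint (t+1)) (hftint t)
      filter_upwards [hmin (t+1)] with ω hω
      exact hω (e t ω)
    have h2 : ∫ ω, ((volume : Measure Ω)[(fun ω' => Fbar (w (t + 1) ω') (e t ω')) |
        MeasurableSpace.comap (w t) inferInstance]) ω = ∫ ω, Fbar (w (t+1) ω) (e t ω) :=
      integral_condExp hm
    have h3 : ∫ ω, ((volume : Measure Ω)[(fun ω' => Fbar (w (t + 1) ω') (e t ω')) |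
        MeasurableSpace.comap (w t) inferInstance]) ω ≤ ∫ ω, (Lam (e t ω) + ε t) := by
      apply integral_mono_ae integrable_condExp ((hLamInt t).add (integrable_const _))
      filter_upwards [hstep t] with ω hω
      have hLeq : Lam (e t ω) = ⨅ u, Fbar u (e t ω) := rfl
      rw [← hLeq] at hω
      simp only [Pi.add_apply]
      linarith
    have h4 : ∫ ω, (Lam (e t ω) + ε t) = (∫ ω, Lam (e t ω)) + ε t := by
      rw [integral_add (hLamInt t) (integrable_const _), integral_const]
      simp
    have h5 : ∫ ω, D t ω = (∫ ω, Fbar (w t ω) (e t ω)) - ∫ ω, Lam (e t ω) := by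
      simp only [hDdef]
      exact integral_sub (hint t) (hLamInt t)
    linarith
  -- telescoping
  have htel : ∀ T : ℕ, (∫ ω, Fbar (w T ω) (e T ω)) + ∑ t ∈ range T, ∫ ω, D t ω
      ≤ (∫ ω, Fbar (w 0 ω) (e 0 ω)) + ∑ t ∈ range T, ε t := by
    intro T
    induction T with
    | zero => simp
    | succ T ih =>
      rw [Finset.sum_range_succ, Finset.sum_range_succ]
      have := hstepE T
      linarith
  have hX_lb : ∀ T : ℕ, m0 ≤ ∫ ω, Fbar (w T ω) (e T ω) := by
    intro T
    have h1 : ∫ (_ : Ω), m0 ∂(volume : Measure Ω) = m0 := by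
      rw [integral_const]; simp
    rw [← h1]
    exact integral_mono (integrable_const _) (hint T) (fun ω => hFbar_ge _ _)
  have hDsum : Summable (fun t => ∫ ω, D t ω) := by
    apply summable_of_sum_range_le (c := (∫ ω, Fbar (w 0 ω) (e 0 ω)) + (∑' t, ε t) - m0)
      (fun t => integral_nonneg (fun ω => hDnn t ω))
    intro T
    have h1 := htel T
    have h2 : ∑ t ∈ range T, ε t ≤ ∑' t, ε t :=
      Summable.sum_le_tsum _ (fun i _ => (hε i).le) hεsum
    have h3 := hX_lb T
    linarith
  have hD0 := ae_tendsto_zero_of_summable_integral D hDmeas hDnn hDint hDsum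
  -- conclusion
  filter_upwards [hD0, ae_all_iff.2 hkey] with ω hω1 hω2
  rw [tendsto_zero_iff_norm_tendsto_zero]
  have hbnd : ∀ t, ‖fderiv ℝ (fun p : EuclideanSpace ℝ (Fin d) × ℝ => Fbar p.1 p.2)
      (w t ω, e t ω)‖ ≤ Real.sqrt (2 * CC * D t ω) := by
    intro t
    have hf : fderiv ℝ (fun p : EuclideanSpace ℝ (Fin d) × ℝ => Fbar p.1 p.2) (w t ω, e t ω)
        = A (w t ω) (e t ω) := (hA _ _).fderiv
    rw [hf, hA_min _ _ (hω2 t)]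
    have hsq : ‖Gm (w t ω) (e t ω)‖ ^ 2 ≤ 2 * CC * D t ω := by
      have hd := descent_inf (f := fun u => Fbar u (e t ω)) (g := fun u => Gm u (e t ω))
        (fun u => hG (e t ω) u) hCC0 (fun x y => hGlip (e t ω) x y) (hbddFbar (e t ω)) (w t ω)
      have hLeq : Lam (e t ω) = ⨅ u, Fbar u (e t ω) := rfl
      have hDeq : D t ω = Fbar (w t ω) (e t ω) - ⨅ u, Fbar u (e t ω) := by
        simp only [hDdef]
        try rw [hLeq]
      have hd2 := hd
      rw [← hDeq] at hd2
      exact hd2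
    calc ‖(Gm (w t ω) (e t ω)).comp
          (ContinuousLinearMap.fst ℝ (EuclideanSpace ℝ (Fin d)) ℝ)‖
        ≤ ‖Gm (w t ω) (e t ω)‖ * ‖ContinuousLinearMap.fst ℝ (EuclideanSpace ℝ (Fin d)) ℝ‖ :=
          ContinuousLinearMap.opNorm_comp_le _ _
      _ ≤ ‖Gm (w t ω) (e t ω)‖ * 1 :=
          mul_le_mul_of_nonneg_left (ContinuousLinearMap.norm_fst_le _ _ _) (norm_nonneg _)
      _ = ‖Gm (w t ω) (e t ω)‖ := mul_one _
      _ ≤ Real.sqrt (2 * CC * D t ω) := Real.le_sqrt_of_sq_le hsq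
  apply squeeze_zero (fun t => norm_nonneg _) hbnd
  have h1 : Tendsto (fun t => 2 * CC * D t ω) atTop (nhds 0) := by
    have := hω1.const_mul (2 * CC)
    simpa [mul_comm] using this
  have h2 := (Real.continuous_sqrt.tendsto' 0 0 (by simp)).comp h1
  exact h2
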